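/- arXiv:2510.18265 — 2 statements merged into one kernel-verified Lean document; each statement's English description precedes it below -/
import Mathlib

section
/- For stars S_n and S_m, the b-chromatic number of the line graph of S_n □ S_m equals m + n. -/
open SimpleGraph

/-- The star graph with a central vertex `0` and `n` leaves. -/
def starGraph (n : ℕ) : SimpleGraph (Fin (n+1)) where
  Adj u v := u ≠ v ∧ (u = 0 ∨ v = 0)
  symm := by
    constructor
    intro u v h
    exact ⟨h.1.symm, h.2.symm⟩
  loopless := by
    constructor
    intro u h
    exact h.1 rfl

/-- A proper coloring with `k` colors which is a b-coloring: every color class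
contains a vertex adjacent to at least one vertex of every other color class. -/
def IsBColoring {V : Type*} (G : SimpleGraph V) (k : ℕ) (c : V → Fin k) : Prop :=
  (∀ u v, G.Adj u v → c u ≠ c v) ∧
    ∀ i : Fin k, ∃ v, c v = i ∧ ∀ j : Fin k, j ≠ i → ∃ u, G.Adj v u ∧ c u = j

/-- `G` admits a b-coloring with `k` colors. -/
def HasBColoring {V : Type*} (G : SimpleGraph V) (k : ℕ) : Prop :=
  ∃ c : V → Fin k, IsBColoring G k c

/-- The set of `k` such that `G` has a b-coloring with `k` colors.  The
b-chromatic number of `G` is the greatest element of this set. -/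
def bChromaticSet {V : Type*} (G : SimpleGraph V) : Set ℕ :=
  {k | HasBColoring G k}

/-- The set of `i` such that `G` has at least `i` vertices of degree at least `i - 1`.
The m-degree of `G` is the greatest element of this set. -/
def mDegreeSet {V : Type*} (G : SimpleGraph V) : Set ℕ :=
  {i | ∃ S : Set V, S.Finite ∧ S.ncard = i ∧ ∀ v ∈ S, i - 1 ≤ (G.neighborSet v).ncard}

/-- The line graph of `G`: vertices are the edges of `G`, two being adjacent iff
they are distinct and share an endpoint. -/
def lineGraphOf {V : Type*} (G : SimpleGraph V) : SimpleGraph G.edgeSet where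
  Adj e f := e ≠ f ∧ ∃ v, v ∈ (e : Sym2 V) ∧ v ∈ (f : Sym2 V)
  symm := by
    constructor
    rintro e f ⟨hne, v, hv1, hv2⟩
    exact ⟨hne.symm, v, hv2, hv1⟩
  loopless := by
    constructor
    rintro e ⟨hne, -⟩
    exact hne rfl

/-- The total graph of `G`: vertices are `V(G) ⊕ E(G)`; adjacency is vertex
adjacency, vertex-edge incidence, or edge adjacency. -/
def totalGraph {V : Type*} (G : SimpleGraph V) : SimpleGraph (V ⊕ G.edgeSet) where
  Adj x y :=
    match x, y with
    | .inl u, .inl v => G.Adj u v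
    | .inl u, .inr e => u ∈ (e : Sym2 V)
    | .inr e, .inl u => u ∈ (e : Sym2 V)
    | .inr e, .inr f => e ≠ f ∧ ∃ v, v ∈ (e : Sym2 V) ∧ v ∈ (f : Sym2 V)
  symm := by
    constructor
    rintro (u | e) (v | f) h
    · exact h.symm
    · exact h
    · exact h
    · exact ⟨h.1.symm, h.2.choose, h.2.choose_spec.2, h.2.choose_spec.1⟩
  loopless := by
    constructor
    rintro (u | e) h
    · exact G.loopless.irrefl u h
    · exact h.1 rfl

/-- The `p`-th power of `G`: same vertices, `u ~ v` iff `0 < d(u,v) ≤ p`. -/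
def graphPower {V : Type*} (G : SimpleGraph V) (p : ℕ) : SimpleGraph V where
  Adj u v := 0 < G.dist u v ∧ G.dist u v ≤ p
  symm := by
    constructor
    intro u v h
    rwa [SimpleGraph.dist_comm]
  loopless := by
    constructor
    intro u h
    simp [SimpleGraph.dist_self] at h


/-!
Colour every edge of `S_n □ S_m` by the edge at the origin parallel to it. This is a proper
colouring of the line graph with `m + n` colours, all of which occur on the clique of edges at the
origin, so it is a b-colouring.

Conversely, let `k > m + n`. Some colour `i` misses the `m + n` edges at the origin, so its
b-vertex is an edge `(0,v)(u,v)` or `(u,0)(u,v)` with `u, v ≠ 0`. The closed neighbourhood of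
such an edge has only `n + 2` (resp. `m + 2`) edges, so up to symmetry `m = 1` and `k = n + 2`.
In the book `S_n □ K_2` with `n + 2` colours, let `i_t` be a colour missing at `(0,t)`. Every
colour occurs at an end of the spine `(0,0)(0,1)`, so `i_0 ≠ i_1`. A b-vertex in the page of
`w ≠ 0` forces the colour of the rung `(w,0)(w,1)`. That colour is `i_t` if the b-vertex is the
spoke in row `t`, and the colour of the spine if it is the rung itself. These three colours are
distinct, so each of the `n + 1` pages holds at most one b-vertex, which leaves no room for
`n + 2` of them.
-/

open Finset

section BColoring

variable {V W : Type*} {G : SimpleGraph V} {H : SimpleGraph W} {k : ℕ} {c : V → Fin k}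

def IsBVertex (G : SimpleGraph V) (c : V → Fin k) (v : V) : Prop :=
  ∀ j, j ≠ c v → ∃ u, G.Adj v u ∧ c u = j

theorem IsBColoring.exists_isBVertex (h : IsBColoring G k c) (i : Fin k) :
    ∃ v, c v = i ∧ IsBVertex G c v := by
  obtain ⟨v, rfl, hv⟩ := h.2 i
  exact ⟨v, rfl, hv⟩

theorem IsBVertex.eq_of_forall_adj (hc : ∀ u v, G.Adj u v → c u ≠ c v) {v w : V}
    (hv : IsBVertex G c v) (hw : ∀ u, G.Adj v u → G.Adj w u) : c w = c v := by
  by_contra h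
  obtain ⟨u, hvu, hu⟩ := hv _ h
  exact hc w u (hw u hvu) hu.symm

theorem IsBColoring.of_isClique (hc : ∀ u v, G.Adj u v → c u ≠ c v) {s : Set V}
    (hs : G.IsClique s) (hsurj : ∀ i, ∃ v ∈ s, c v = i) : IsBColoring G k c := by
  refine ⟨hc, fun i => ?_⟩
  obtain ⟨v, hv, rfl⟩ := hsurj i
  refine ⟨v, rfl, fun j hj => ?_⟩
  obtain ⟨u, hu, rfl⟩ := hsurj j
  exact ⟨u, hs hv hu fun h => hj (h ▸ rfl), rfl⟩

theorem HasBColoring.of_iso (φ : G ≃g H) : HasBColoring H k → HasBColoring G k := by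
  rintro ⟨c, hc, hb⟩
  refine ⟨c ∘ φ, fun u v huv => hc _ _ (φ.map_adj_iff.2 huv), fun i => ?_⟩
  obtain ⟨v, rfl, hv⟩ := hb i
  refine ⟨φ.symm v, by simp, fun j hj => ?_⟩
  obtain ⟨u, hvu, rfl⟩ := hv j (by simpa using hj)
  exact ⟨φ.symm u, φ.symm.map_adj_iff.2 hvu, by simp⟩

end BColoring

section LineGraph

variable {V W : Type*} {G : SimpleGraph V} {H : SimpleGraph W} {k : ℕ}

def SimpleGraph.Iso.lineGraphOf (φ : G ≃g H) : lineGraphOf G ≃g lineGraphOf H where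
  toEquiv := φ.mapEdgeSet
  map_rel_iff' := by
    intro e f
    refine and_congr φ.mapEdgeSet.injective.ne_iff ?_
    simp only [Iso.mapEdgeSet_apply, Hom.mapEdgeSet_coe, Sym2.mem_map]
    refine ⟨?_, fun ⟨v, hve, hvf⟩ => ⟨φ v, ⟨v, hve, rfl⟩, v, hvf, rfl⟩⟩
    rintro ⟨-, ⟨v, hve, rfl⟩, w, hwf, hwv⟩
    exact ⟨v, hve, φ.injective hwv ▸ hwf⟩

def incidentEdges (G : SimpleGraph V) [DecidableEq V] [DecidableRel G.Adj] (x : V)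
    [Fintype (G.neighborSet x)] : Finset G.edgeSet :=
  (G.incidenceFinset x).subtype (· ∈ G.edgeSet)

variable {x y : V} [Fintype (G.neighborSet x)] [Fintype (G.neighborSet y)]

section Decidable

variable [DecidableEq V] [DecidableRel G.Adj]

@[simp]
theorem mem_incidentEdges {e : G.edgeSet} : e ∈ incidentEdges G x ↔ x ∈ (e : Sym2 V) := by
  simp [incidentEdges, incidenceSet, e.2]

theorem card_incidentEdges : #(incidentEdges G x) = G.degree x := by
  rw [incidentEdges, card_subtype, Finset.filter_true_of_mem fun e he => ?_,
    card_incidenceFinset_eq_degree]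
  exact ((G.mem_incidenceFinset x e).1 he).1

end Decidable

theorem exists_color_not_incident (c : G.edgeSet → Fin k) (h : G.degree x < k) :
    ∃ i, ∀ e : G.edgeSet, x ∈ (e : Sym2 V) → c e ≠ i := by
  classical
  obtain ⟨i, -, hi⟩ := Finset.exists_mem_notMem_of_card_lt_card
    (s := (incidentEdges G x).image c) (t := univ)
    (by simpa using (card_image_le).trans_lt (card_incidentEdges (G := G) (x := x) ▸ h))
  exact ⟨i, fun e he hei => hi (mem_image.2 ⟨e, mem_incidentEdges.2 he, hei⟩)⟩

theorem IsBVertex.add_one_le_degree_add_degree {c : G.edgeSet → Fin k} {e : G.edgeSet}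
    (hb : IsBVertex (lineGraphOf G) c e) (he : (e : Sym2 V) = s(x, y)) :
    k + 1 ≤ G.degree x + G.degree y := by
  classical
  have hcover : univ ⊆ (incidentEdges G x ∪ incidentEdges G y).image c := by
    intro j _
    rw [mem_image]
    by_cases hj : j = c e
    · exact ⟨e, by simp [he], hj.symm⟩
    obtain ⟨f, ⟨-, z, hze, hzf⟩, rfl⟩ := hb j hj
    rw [he, Sym2.mem_iff] at hze
    refine ⟨f, ?_, rfl⟩
    rcases hze with rfl | rfl <;> simp [hzf]
  have hinter : e ∈ incidentEdges G x ∩ incidentEdges G y := by simp [he]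
  have := card_le_card hcover
  have := card_union_add_card_inter (incidentEdges G x) (incidentEdges G y)
  have := card_pos.2 ⟨e, hinter⟩
  simp only [card_univ, Fintype.card_fin, card_incidentEdges] at *
  have := card_image_le (s := incidentEdges G x ∪ incidentEdges G y) (f := c)
  omega

theorem hasBColoring_lineGraphOf_degree (d : Sym2 V → V) (hd : ∀ e ∈ G.edgeSet, G.Adj x (d e))
    (hinj : ∀ p q r, G.Adj p q → G.Adj p r → d s(p, q) = d s(p, r) → q = r)
    (hx : ∀ y, G.Adj x y → d s(x, y) = y) : HasBColoring (lineGraphOf G) (G.degree x) := by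
  let φ : G.neighborSet x ≃ Fin (G.degree x) :=
    Fintype.equivFinOfCardEq (G.card_neighborSet_eq_degree x)
  refine ⟨fun e => φ ⟨d e, hd e e.2⟩,
    IsBColoring.of_isClique ?_ (s := {e | x ∈ (e : Sym2 V)})
    (fun e he f hf hne => ⟨hne, x, he, hf⟩) fun i => ?_⟩
  · rintro ⟨e, he⟩ ⟨f, hf⟩ ⟨hne, p, hpe, hpf⟩ hef
    obtain ⟨q, rfl⟩ := Sym2.mem_iff_exists.1 hpe
    obtain ⟨r, rfl⟩ := Sym2.mem_iff_exists.1 hpf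
    have hqr := hinj p q r he hf (congrArg Subtype.val (φ.injective hef))
    exact hne (by subst hqr; rfl)
  · refine ⟨⟨s(x, φ.symm i), (φ.symm i).2⟩, Sym2.mem_mk_left _ _, ?_⟩
    simp only [hx _ (φ.symm i).2, Subtype.coe_eta, Equiv.apply_symm_apply]

end LineGraph

section StarBox

variable {n m k : ℕ}

theorem starGraph_eq_starGraph_zero (n : ℕ) :
    _root_.starGraph n = SimpleGraph.starGraph (0 : Fin (n + 1)) := by
  ext u v
  exact starGraph_adj.symm

abbrev starBox (n m : ℕ) : SimpleGraph (Fin (n + 1) × Fin (m + 1)) :=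
  SimpleGraph.starGraph 0 □ SimpleGraph.starGraph 0

theorem degree_starGraph_zero (u : Fin (n + 1)) :
    (SimpleGraph.starGraph (0 : Fin (n + 1))).degree u = if u = 0 then n else 1 := by
  split_ifs with h
  · rw [h, degree_starGraph_center, Fintype.card_fin, Nat.add_sub_cancel]
  · exact degree_starGraph_of_ne_center h

theorem degree_starBox (p : Fin (n + 1) × Fin (m + 1)) :
    (starBox n m).degree p = (if p.1 = 0 then n else 1) + (if p.2 = 0 then m else 1) := by
  rw [degree_boxProd, degree_starGraph_zero, degree_starGraph_zero]

/-- The neighbour `y` of the origin such that `s((0, 0), y)` is parallel to the given edge: in the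
coordinate where the ends of an edge differ, one of them is the centre `0`, so their maximum is the
leaf. -/
def starBoxDirection : Sym2 (Fin (n + 1) × Fin (m + 1)) → Fin (n + 1) × Fin (m + 1) :=
  Sym2.lift ⟨fun p q => if p.1 = q.1 then (0, max p.2 q.2) else (max p.1 q.1, 0), by
    intro p q
    simp only [eq_comm, max_comm]⟩

theorem starBox_adj_starBoxDirection {e : Sym2 (Fin (n + 1) × Fin (m + 1))}
    (he : e ∈ (starBox n m).edgeSet) : (starBox n m).Adj (0, 0) (starBoxDirection e) := by
  induction e using Sym2.ind with | _ p q => ?_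
  rw [mem_edgeSet, boxProd_adj] at he
  simp only [starBoxDirection, Sym2.lift_mk, boxProd_adj]
  split_ifs <;> simp only [starGraph_adj, ne_eq, Fin.ext_iff, Fin.val_zero, Fin.coe_max,
    not_true_eq_false, true_or, and_true, false_and, false_or, or_false] at * <;> omega

theorem eq_of_starBoxDirection_eq {p q r : Fin (n + 1) × Fin (m + 1)}
    (hq : (starBox n m).Adj p q) (hr : (starBox n m).Adj p r)
    (hqr : starBoxDirection s(p, q) = starBoxDirection s(p, r)) : q = r := by
  rw [boxProd_adj] at hq hr
  simp only [starBoxDirection, Sym2.lift_mk] at hqr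
  split_ifs at hqr <;> simp only [starGraph_adj, Prod.ext_iff, ne_eq, Fin.ext_iff,
    Fin.val_zero, Fin.coe_max] at * <;> omega

theorem starBoxDirection_zero {y : Fin (n + 1) × Fin (m + 1)} (hy : (starBox n m).Adj (0, 0) y) :
    starBoxDirection s((0, 0), y) = y := by
  rw [boxProd_adj] at hy
  simp only [starBoxDirection, Sym2.lift_mk]
  split_ifs <;> simp only [starGraph_adj, Prod.ext_iff, ne_eq, Fin.ext_iff,
    Fin.val_zero, Fin.coe_max] at * <;> omega

theorem hasBColoring_lineGraphOf_starBox : HasBColoring (lineGraphOf (starBox n m)) (m + n) := by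
  have := hasBColoring_lineGraphOf_degree (G := starBox n m) (x := (0, 0)) starBoxDirection
    (fun _ => starBox_adj_starBoxDirection) (fun _ _ _ => eq_of_starBoxDirection_eq)
    (fun _ => starBoxDirection_zero)
  rwa [degree_starBox, if_pos rfl, if_pos rfl, Nat.add_comm n m] at this

theorem eq_one_of_hasBColoring_lineGraphOf_starBox (h : HasBColoring (lineGraphOf (starBox n m)) k)
    (hk : m + n < k) : (m = 1 ∧ k = n + 2) ∨ (n = 1 ∧ k = m + 2) := by
  obtain ⟨c, hc⟩ := h
  obtain ⟨i, hi⟩ := exists_color_not_incident c (x := (0, 0)) (by simp [degree_starBox]; omega)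
  obtain ⟨⟨e, he⟩, rfl, hb⟩ := hc.exists_isBVertex i
  induction e using Sym2.ind with | _ p q => ?_
  have hdeg := hb.add_one_le_degree_add_degree rfl
  have hp : p ≠ (0, 0) := fun h => hi _ (by simp [h]) rfl
  have hq : q ≠ (0, 0) := fun h => hi _ (by simp [h]) rfl
  rw [mem_edgeSet, boxProd_adj] at he
  simp only [starGraph_adj, degree_starBox] at he hdeg
  obtain ⟨a, b⟩ := p
  obtain ⟨a', b'⟩ := q
  have := b.isLt
  have := a.isLt
  simp only [ne_eq, Prod.mk.injEq, Fin.ext_iff, Fin.val_zero] at *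
  split_ifs at hdeg <;> omega

end StarBox

/-! `starBox n 1` is the book `S_n □ K_2`: its pages are the 4-cycles `(0,0),(w,0),(w,1),(0,1)`,
glued along the spine `bookRung 0`. -/

section Book

variable {n : ℕ}

def bookRung (w : Fin (n + 1)) : (starBox n 1).edgeSet :=
  ⟨s((w, 0), (w, 1)), by simp [boxProd_adj]⟩

def bookSpoke {w : Fin (n + 1)} (hw : w ≠ 0) (t : Fin 2) : (starBox n 1).edgeSet :=
  ⟨s((0, t), (w, t)), by simp [boxProd_adj, hw.symm]⟩

@[simp]
theorem coe_bookRung (w : Fin (n + 1)) :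
    (bookRung w : Sym2 (Fin (n + 1) × Fin 2)) = s((w, 0), (w, 1)) := rfl

@[simp]
theorem coe_bookSpoke {w : Fin (n + 1)} (hw : w ≠ 0) (t : Fin 2) :
    (bookSpoke hw t : Sym2 (Fin (n + 1) × Fin 2)) = s((0, t), (w, t)) := rfl

theorem bookSpoke_ne_bookRung {w : Fin (n + 1)} (hw : w ≠ 0) (t : Fin 2) (w' : Fin (n + 1)) :
    bookSpoke hw t ≠ bookRung w' := by
  simp only [ne_eq, Subtype.ext_iff, coe_bookSpoke, coe_bookRung, Sym2.eq_iff, Prod.mk.injEq]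
  grind

theorem eq_bookSpoke_or_eq_bookRung_of_mem {w : Fin (n + 1)} (hw : w ≠ 0) {t : Fin 2}
    {e : (starBox n 1).edgeSet} (h : (w, t) ∈ (e : Sym2 (Fin (n + 1) × Fin 2))) :
    e = bookSpoke hw t ∨ e = bookRung w := by
  obtain ⟨q, hq⟩ := Sym2.mem_iff_exists.1 h
  have hadj : (starBox n 1).Adj (w, t) q := by rw [← mem_edgeSet, ← hq]; exact e.2
  obtain ⟨a, b⟩ := q
  rw [boxProd_adj] at hadj
  simp only [starGraph_adj] at hadj
  rcases hadj with ⟨⟨-, h0⟩, rfl⟩ | ⟨⟨hne, -⟩, rfl⟩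
  · rw [h0.resolve_left hw] at hq
    exact Or.inl (Subtype.ext (hq.trans Sym2.eq_swap))
  · refine Or.inr (Subtype.ext (hq.trans ?_))
    fin_cases t <;> fin_cases b <;> simp_all [Sym2.eq_swap]

def InBookPage (w : Fin (n + 1)) (e : (starBox n 1).edgeSet) : Prop :=
  e = bookRung w ∨ ∃ (hw : w ≠ 0) (t : Fin 2), e = bookSpoke hw t

theorem inBookPage_of_mem {w : Fin (n + 1)} (hw : w ≠ 0) {t : Fin 2} {e : (starBox n 1).edgeSet}
    (h : (w, t) ∈ (e : Sym2 (Fin (n + 1) × Fin 2))) : InBookPage w e :=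
  (eq_bookSpoke_or_eq_bookRung_of_mem hw h).symm.imp_right fun h => ⟨hw, t, h⟩

theorem exists_inBookPage (e : (starBox n 1).edgeSet) : ∃ w, InBookPage w e := by
  obtain ⟨e, he⟩ := e
  induction e using Sym2.ind with | _ p q => ?_
  obtain ⟨a, b⟩ := p
  obtain ⟨a', b'⟩ := q
  by_cases ha : a = 0
  swap
  · exact ⟨a, inBookPage_of_mem (t := b) ha (Sym2.mem_mk_left _ _)⟩
  by_cases ha' : a' = 0
  swap
  · exact ⟨a', inBookPage_of_mem (t := b') ha' (Sym2.mem_mk_right _ _)⟩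
  subst ha ha'
  refine ⟨0, Or.inl (Subtype.ext ?_)⟩
  rw [mem_edgeSet, boxProd_adj] at he
  fin_cases b <;> fin_cases b' <;> simp_all [Sym2.eq_swap]

variable {k : ℕ} {c : (starBox n 1).edgeSet → Fin k}

theorem color_bookRung_of_isBVertex_bookSpoke {w : Fin (n + 1)} (hw : w ≠ 0) {t : Fin 2}
    {i : Fin k} (hb : IsBVertex (lineGraphOf (starBox n 1)) c (bookSpoke hw t))
    (hi : ∀ e : (starBox n 1).edgeSet, (0, t) ∈ (e : Sym2 (Fin (n + 1) × Fin 2)) →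
      c e ≠ i) :
    c (bookRung w) = i := by
  obtain ⟨f, ⟨hsf, x, hxs, hxf⟩, rfl⟩ := hb i (hi _ (by simp)).symm
  rw [coe_bookSpoke, Sym2.mem_iff] at hxs
  rcases hxs with rfl | rfl
  · exact absurd rfl (hi f hxf)
  · rcases eq_bookSpoke_or_eq_bookRung_of_mem hw hxf with rfl | rfl
    · exact absurd rfl hsf
    · rfl

theorem color_bookRung_of_isBVertex
    (hc : ∀ e f, (lineGraphOf (starBox n 1)).Adj e f → c e ≠ c f) {w : Fin (n + 1)}
    (hw : w ≠ 0) (hb : IsBVertex (lineGraphOf (starBox n 1)) c (bookRung w)) :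
    c (bookRung w) = c (bookRung 0) := by
  refine (hb.eq_of_forall_adj hc fun f ⟨hrf, x, hxr, hxf⟩ => ?_).symm
  obtain ⟨t, rfl⟩ : ∃ t, x = (w, t) := by
    rw [coe_bookRung, Sym2.mem_iff] at hxr
    rcases hxr with rfl | rfl <;> exact ⟨_, rfl⟩
  rcases eq_bookSpoke_or_eq_bookRung_of_mem hw hxf with rfl | rfl
  · exact ⟨(bookSpoke_ne_bookRung hw t 0).symm, (0, t), by fin_cases t <;> simp, by simp⟩
  · exact absurd rfl hrf

theorem IsBColoring.exists_color_at_bookSpine (hc : IsBColoring (lineGraphOf (starBox n 1)) k c)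
    (i : Fin k) :
    ∃ (t : Fin 2) (e : (starBox n 1).edgeSet), (0, t) ∈ (e : Sym2 (Fin (n + 1) × Fin 2)) ∧
      c e = i := by
  obtain ⟨e, rfl, hb⟩ := hc.exists_isBVertex i
  obtain ⟨w, rfl | ⟨hw, t, rfl⟩⟩ := exists_inBookPage e
  · by_cases hw : w = 0
    · exact ⟨0, _, by simp [hw], rfl⟩
    · exact ⟨0, bookRung 0, by simp, (color_bookRung_of_isBVertex hc.1 hw hb).symm⟩
  · exact ⟨t, _, by simp, rfl⟩

theorem eq_of_isBVertex_of_inBookPage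
    (hc : ∀ e f, (lineGraphOf (starBox n 1)).Adj e f → c e ≠ c f) {miss : Fin 2 → Fin k}
    (hmiss : ∀ t (e : (starBox n 1).edgeSet), (0, t) ∈ (e : Sym2 (Fin (n + 1) × Fin 2)) →
      c e ≠ miss t)
    (hinj : Function.Injective miss) {w : Fin (n + 1)} {e f : (starBox n 1).edgeSet}
    (he : IsBVertex (lineGraphOf (starBox n 1)) c e)
    (hf : IsBVertex (lineGraphOf (starBox n 1)) c f)
    (hwe : InBookPage w e) (hwf : InBookPage w f) : e = f := by
  have hspoke {t : Fin 2} (hw : w ≠ 0)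
      (hb : IsBVertex (lineGraphOf (starBox n 1)) c (bookSpoke hw t)) : c (bookRung w) = miss t :=
    color_bookRung_of_isBVertex_bookSpoke hw hb (hmiss t)
  have hspine (t : Fin 2) : c (bookRung 0) ≠ miss t := hmiss t _ (by fin_cases t <;> simp)
  rcases hwe with rfl | ⟨hw, t, rfl⟩ <;> rcases hwf with rfl | ⟨hw', t', rfl⟩
  · rfl
  · exact absurd ((color_bookRung_of_isBVertex hc hw' he).symm.trans (hspoke hw' hf)) (hspine t')
  · exact absurd ((color_bookRung_of_isBVertex hc hw hf).symm.trans (hspoke hw he)) (hspine t)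
  · obtain rfl := hinj ((hspoke hw he).symm.trans (hspoke hw' hf))
    rfl

theorem not_hasBColoring_lineGraphOf_starBox_one :
    ¬ HasBColoring (lineGraphOf (starBox n 1)) (n + 2) := by
  rintro ⟨c, hc⟩
  choose miss hmiss using fun t : Fin 2 =>
    exists_color_not_incident c (x := (0, t)) (by rw [degree_starBox]; split_ifs <;> omega)
  have hinj : Function.Injective miss := by
    intro t t' h
    obtain ⟨s, e, hs, hse⟩ := hc.exists_color_at_bookSpine (miss t)
    have hst : s ≠ t := by rintro rfl; exact hmiss s e hs hse
    have hst' : s ≠ t' := by rintro rfl; exact hmiss s e hs (hse.trans h)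
    fin_cases s <;> fin_cases t <;> fin_cases t' <;> simp_all
  choose b hbc hb using hc.exists_isBVertex
  choose page hpage using fun j => exists_inBookPage (b j)
  obtain ⟨j, j', hne, hjj'⟩ := Fintype.exists_ne_map_eq_of_card_lt page (by simp)
  apply hne
  rw [← hbc j, ← hbc j',
    eq_of_isBVertex_of_inBookPage hc.1 hmiss hinj (hb j) (hb j') (hpage j) (hjj' ▸ hpage j')]

end Book

theorem le_of_hasBColoring_lineGraphOf_starBox {n m k : ℕ}
    (h : HasBColoring (lineGraphOf (starBox n m)) k) : k ≤ m + n := by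
  by_contra! hk
  rcases eq_one_of_hasBColoring_lineGraphOf_starBox h hk with ⟨rfl, rfl⟩ | ⟨rfl, rfl⟩
  · exact not_hasBColoring_lineGraphOf_starBox_one h
  · exact not_hasBColoring_lineGraphOf_starBox_one (h.of_iso (boxProdComm _ _).lineGraphOf)

theorem bChromatic_lineGraphOf_boxProd_star (n m : ℕ) :
    IsGreatest (bChromaticSet (lineGraphOf ((_root_.starGraph n).boxProd (_root_.starGraph m)))) (m + n) := by
  rw [starGraph_eq_starGraph_zero, starGraph_eq_starGraph_zero]
  exact ⟨hasBColoring_lineGraphOf_starBox, fun _ => le_of_hasBColoring_lineGraphOf_starBox⟩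
end

section
/- In the cube (S_n □ S_m)^3, the induced subgraph on the vertices (w_i, v_j) with i, j ≠ 0 (both coordinates non-central) is isomorphic to the rook graph K_n □ K_m, and every vertex outside this subgraph is adjacent to all other vertices of (S_n □ S_m)^3. -/
open SimpleGraph

/-- The line graph of `G`: vertices are the edges of `G`, two being adjacent iff
they are distinct and share an endpoint. -/
def lineGraph {V : Type*} (G : SimpleGraph V) : SimpleGraph G.edgeSet where
  Adj e f := e ≠ f ∧ ∃ v, v ∈ (e : Sym2 V) ∧ v ∈ (f : Sym2 V)
  symm := by
    constructor
    rintro e f ⟨hne, v, hv1, hv2⟩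
    exact ⟨hne.symm, v, hv2, hv1⟩
  loopless := by
    constructor
    rintro e ⟨hne, -⟩
    exact hne rfl

/-!
Distances add up in a Cartesian product of connected graphs. In a star the centre is within
distance 1 of every vertex and two distinct leaves are at distance exactly 2. So two vertices of
`S_n □ S_m` with both coordinates leaves are at distance twice the number of coordinates in which
they differ, which is at most 3 exactly when they lie in a common row or column of the rook graph;
a vertex with a central coordinate is within distance `1 + 2 = 3` of every vertex.
-/

namespace SimpleGraph

variable {α β : Type*} {G : SimpleGraph α} {H : SimpleGraph β}

lemma Connected.dist_boxProd (hG : G.Connected) (hH : H.Connected) (x y : α × β) :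
    (G □ H).dist x y = G.dist x.1 y.1 + H.dist x.2 y.2 := by
  apply Nat.cast_injective (R := ℕ∞)
  rw [Nat.cast_add, ((hG.boxProd hH) x y).coe_dist_eq_edist, (hG x.1 y.1).coe_dist_eq_edist,
    (hH x.2 y.2).coe_dist_eq_edist, edist_boxProd]

lemma Connected.graphPower_adj_iff (hG : G.Connected) {p : ℕ} {u v : α} :
    (graphPower G p).Adj u v ↔ u ≠ v ∧ G.dist u v ≤ p := by
  change 0 < G.dist u v ∧ _ ↔ _
  rw [Nat.pos_iff_ne_zero, Ne, hG.dist_eq_zero_iff]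

lemma top_boxProd_top_adj {x y : α × β} :
    ((⊤ : SimpleGraph α) □ (⊤ : SimpleGraph β)).Adj x y ↔
      x ≠ y ∧ (x.1 = y.1 ∨ x.2 = y.2) := by
  simp only [boxProd_adj, top_adj, Ne, Prod.ext_iff]
  tauto

end SimpleGraph

section starGraph

variable {n : ℕ}

lemma starGraph_adj_zero {v : Fin (n+1)} (hv : v ≠ 0) : (_root_.starGraph n).Adj 0 v :=
  ⟨Ne.symm hv, Or.inl rfl⟩

lemma starGraph_connected (n : ℕ) : (_root_.starGraph n).Connected := by
  rw [connected_iff]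
  refine ⟨fun u v => ?_, ⟨0⟩⟩
  have reachable_zero (w : Fin (n+1)) : (_root_.starGraph n).Reachable w 0 := by
    by_cases hw : w = 0
    · rw [hw]
    · exact (starGraph_adj_zero hw).reachable.symm
  exact (reachable_zero u).trans (reachable_zero v).symm

lemma starGraph_dist_zero_le_one (v : Fin (n+1)) : (_root_.starGraph n).dist 0 v ≤ 1 := by
  by_cases hv : v = 0
  · simp [hv]
  · exact (dist_eq_one_iff_adj.mpr (starGraph_adj_zero hv)).le

lemma starGraph_dist_le_two (u v : Fin (n+1)) : (_root_.starGraph n).dist u v ≤ 2 :=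
  calc (_root_.starGraph n).dist u v
        ≤ (_root_.starGraph n).dist u 0 + (_root_.starGraph n).dist 0 v :=
          (starGraph_connected n).dist_triangle
    _ ≤ 1 + 1 := by
          rw [dist_comm]
          exact add_le_add (starGraph_dist_zero_le_one u) (starGraph_dist_zero_le_one v)

lemma starGraph_dist_of_ne_zero {u v : Fin (n+1)} (hu : u ≠ 0) (hv : v ≠ 0) :
    (_root_.starGraph n).dist u v = if u = v then 0 else 2 := by
  split_ifs with huv
  · rw [huv, dist_self]
  · have not_adj : ¬(_root_.starGraph n).Adj u v := fun h => h.2.elim hu hv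
    have := (starGraph_connected n).one_lt_dist_of_ne_of_not_adj huv not_adj
    have := starGraph_dist_le_two u v
    omega

end starGraph

section cube

variable {n m : ℕ}

lemma starGraph_boxProd_connected (n m : ℕ) :
    (_root_.starGraph n □ _root_.starGraph m).Connected :=
  (starGraph_connected n).boxProd (starGraph_connected m)

lemma starGraph_boxProd_cube_adj_of_ne_zero {x y : Fin (n+1) × Fin (m+1)}
    (hx : x.1 ≠ 0 ∧ x.2 ≠ 0) (hy : y.1 ≠ 0 ∧ y.2 ≠ 0) :
    (graphPower (_root_.starGraph n □ _root_.starGraph m) 3).Adj x y ↔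
      x ≠ y ∧ (x.1 = y.1 ∨ x.2 = y.2) := by
  rw [(starGraph_boxProd_connected n m).graphPower_adj_iff,
    (starGraph_connected n).dist_boxProd (starGraph_connected m),
    starGraph_dist_of_ne_zero hx.1 hy.1, starGraph_dist_of_ne_zero hx.2 hy.2]
  split_ifs <;> simp_all

lemma starGraph_boxProd_cube_adj_of_center {x : Fin (n+1) × Fin (m+1)} (hx : x.1 = 0 ∨ x.2 = 0)
    {y : Fin (n+1) × Fin (m+1)} (hxy : x ≠ y) :
    (graphPower (_root_.starGraph n □ _root_.starGraph m) 3).Adj x y := by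
  rw [(starGraph_boxProd_connected n m).graphPower_adj_iff,
    (starGraph_connected n).dist_boxProd (starGraph_connected m)]
  refine ⟨hxy, ?_⟩
  rcases hx with hx | hx
  · have := hx ▸ starGraph_dist_zero_le_one y.1
    have := starGraph_dist_le_two x.2 y.2
    omega
  · have := starGraph_dist_le_two x.1 y.1
    have := hx ▸ starGraph_dist_zero_le_one y.2
    omega

end cube

theorem cube_induced_rook (n m : ℕ) :
    Nonempty
      (((graphPower ((_root_.starGraph n).boxProd (_root_.starGraph m)) 3).induce
          {x : Fin (n+1) × Fin (m+1) | x.1 ≠ 0 ∧ x.2 ≠ 0}) ≃g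
        ((⊤ : SimpleGraph (Fin n)).boxProd (⊤ : SimpleGraph (Fin m)))) ∧
    ∀ x : Fin (n+1) × Fin (m+1), (x.1 = 0 ∨ x.2 = 0) →
      ∀ y, y ≠ x → (graphPower ((_root_.starGraph n).boxProd (_root_.starGraph m)) 3).Adj x y := by
  refine ⟨?_, fun x hx y hyx => starGraph_boxProd_cube_adj_of_center hx hyx.symm⟩
  let leaves : Fin n × Fin m ≃ {x : Fin (n+1) × Fin (m+1) | x.1 ≠ 0 ∧ x.2 ≠ 0} :=
    ((finSuccAboveEquiv 0).prodCongr (finSuccAboveEquiv 0)).trans Equiv.subtypeProdEquivProd.symm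
  refine ⟨Iso.symm ⟨leaves, fun {a b} => ?_⟩⟩
  rw [comap_adj, Function.Embedding.coe_subtype,
    starGraph_boxProd_cube_adj_of_ne_zero (leaves a).2 (leaves b).2, top_boxProd_top_adj]
  simp [leaves, Equiv.subtypeProdEquivProd, finSuccAboveEquiv_apply, Prod.ext_iff]
end
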